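/- arXiv:2601.03201 — 3 statements merged into one kernel-verified Lean document; each statement's English description precedes it below -/
import Mathlib

section
/- Let φ be an unsatisfiable 3-CNF formula over n Boolean variables and let f_φ : [0,1]ⁿ → ℝ be defined by f_φ(x) = min over clauses i of (max over the three literals j of ℓ_{ij}(x)), where ℓ_{ij}(x) = x_k for a positive literal X_k and ℓ_{ij}(x) = 1 - x_k for a negative literal ¬X_k. Then 0 ≤ f_φ(x) ≤ 1/2 for all x ∈ [0,1]ⁿ. -/
/-- The value of a literal `(k, s)` (variable `X_k`, positive iff `s = true`)
at a real point `x`. -/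
def litVal {n : ℕ} (c : Fin n × Bool) (x : Fin n → ℝ) : ℝ :=
  if c.2 then x c.1 else 1 - x c.1

/-- `f_φ(x) = min_i max_j ℓ_{ij}(x)` for a 3-CNF formula `C` with `m` clauses. -/
noncomputable def cnfFun {n m : ℕ} (hm : 0 < m) (C : Fin m → Fin 3 → Fin n × Bool)
    (x : Fin n → ℝ) : ℝ :=
  Finset.univ.inf' (Finset.univ_nonempty_iff.mpr ⟨⟨0, hm⟩⟩)
    (fun i => Finset.univ.sup' (Finset.univ_nonempty_iff.mpr ⟨0⟩)
      (fun j => litVal (C i j) x))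

/-- An assignment `a` satisfies the 3-CNF formula `C`. -/
def cnfSat {n m : ℕ} (C : Fin m → Fin 3 → Fin n × Bool) (a : Fin n → Bool) : Prop :=
  ∀ i : Fin m, ∃ j : Fin 3, (if (C i j).2 then a (C i j).1 else ¬ a (C i j).1)

theorem unsat_cnf_fun_le_half {n m : ℕ} (hm : 0 < m)
    (C : Fin m → Fin 3 → Fin n × Bool)
    (hunsat : ∀ a : Fin n → Bool, ¬ cnfSat C a) :
    ∀ x : Fin n → ℝ, (∀ k, x k ∈ Set.Icc (0 : ℝ) 1) →
      0 ≤ cnfFun hm C x ∧ cnfFun hm C x ≤ 1 / 2 := by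
  intro x hx
  constructor
  · apply Finset.le_inf'
    intro i _
    refine le_trans ?_ (Finset.le_sup' (fun j => litVal (C i j) x) (Finset.mem_univ (0 : Fin 3)))
    unfold litVal
    have h := hx (C i 0).1
    simp only [Set.mem_Icc] at h
    split <;> linarith [h.1, h.2]
  · set a : Fin n → Bool := fun k => decide (x k > 1/2) with ha
    have := hunsat a
    unfold cnfSat at this
    push_neg at this
    obtain ⟨i, hi⟩ := this
    apply Finset.inf'_le_of_le _ (Finset.mem_univ i)
    apply Finset.sup'_le
    intro j _
    have hj := hi j
    have hxk := hx (C i j).1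
    simp only [Set.mem_Icc] at hxk
    unfold litVal
    rcases h2 : (C i j).2 with _ | _ <;> simp [h2, ha] at hj ⊢ <;> linarith [hj, hxk.1, hxk.2]
end

section
/- Let f : [0,1]ⁿ → ℝ be a function of the form f(x) = min_{i∈[m]} max_{j∈[3]} ℓ_{ij}(x) where each ℓ_{ij}(x) is either x_k or 1 - x_k for some k. If f attains a positive maximum c on [0,1]ⁿ, then c is attained at some point x with all coordinates in {0,1}, or c ≤ 1/2. -/
theorem cnf_fun_max_attained_at_boolean_or_le_half {n m : ℕ} (hm : 0 < m) (hn : 0 < n)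
    (C : Fin m → Fin 3 → Fin n × Bool) (c : ℝ) (hc : 0 < c)
    (x₀ : Fin n → ℝ) (hx₀ : ∀ k, x₀ k ∈ Set.Icc (0 : ℝ) 1)
    (hmax₀ : cnfFun hm C x₀ = c)
    (hmax : ∀ x : Fin n → ℝ, (∀ k, x k ∈ Set.Icc (0 : ℝ) 1) → cnfFun hm C x ≤ c) :
    (∃ x : Fin n → ℝ, (∀ k, x k = 0 ∨ x k = 1) ∧ cnfFun hm C x = c) ∨ c ≤ 1 / 2 := by
  by_cases hc2 : c ≤ 1 / 2
  · exact Or.inr hc2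
  push_neg at hc2
  left
  set x : Fin n → ℝ := fun k => if (1:ℝ)/2 ≤ x₀ k then 1 else 0 with hxdef
  have hxmem : ∀ k, x k ∈ Set.Icc (0:ℝ) 1 := by
    intro k; simp only [hxdef]; split <;> norm_num
  have hc1 : c ≤ 1 := by
    rw [← hmax₀]
    refine le_trans (Finset.inf'_le _ (Finset.mem_univ ⟨0, hm⟩)) ?_
    apply Finset.sup'_le
    intro j _
    unfold litVal
    rcases hx₀ (C ⟨0, hm⟩ j).1 with ⟨h0, h1⟩
    split <;> linarith
  refine ⟨x, fun k => ?_, le_antisymm (hmax x hxmem) ?_⟩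
  · simp only [hxdef]; split
    · exact Or.inr rfl
    · exact Or.inl rfl
  · apply Finset.le_inf'
    intro i _
    have hsup : c ≤ Finset.univ.sup' (Finset.univ_nonempty_iff.mpr ⟨0⟩)
        (fun j => litVal (C i j) x₀) := by
      rw [← hmax₀]; exact Finset.inf'_le _ (Finset.mem_univ i)
    rw [Finset.le_sup'_iff] at hsup
    obtain ⟨j, -, hj⟩ := hsup
    refine Finset.le_sup'_of_le _ (Finset.mem_univ j) ?_
    unfold litVal at hj ⊢
    rcases hx₀ (C i j).1 with ⟨h0, h1⟩
    by_cases hs : (C i j).2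
    · simp only [hs, if_true] at hj ⊢
      have : (1:ℝ)/2 ≤ x₀ (C i j).1 := by linarith
      simp only [hxdef, this, if_pos]
      exact hc1
    · simp only [hs, Bool.false_eq_true, if_false] at hj ⊢
      have : ¬ ((1:ℝ)/2 ≤ x₀ (C i j).1) := by
        intro h; linarith
      simp only [hxdef, this, if_false]
      linarith
end

section
/- Define lsig(z) = max(0, min(1, z)). For n ≥ 1, define g : ℝ → ℝⁿ recursively by g_i(x) = lsig((2^i·x - 1 - Σ_{j=1}^{i-1} 2^{i-j}·g_j(x))·2^{n-i} + 1). Then for every x ∈ [0,1) that is a multiple of 2^{-n} with binary digits a_1,…,a_n (x = Σ_j a_j 2^{-j}), we have g_i(x) = a_i for all i ∈ [n], and moreover g_i(x) ∈ [0,1] for every x ∈ ℝ. -/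
/-- Linearised sigmoid `lsig(z) = max(0, min(1, z))`. -/
noncomputable def lsig (z : ℝ) : ℝ := max 0 (min 1 z)

lemma lsig_mem (z : ℝ) : lsig z ∈ Set.Icc (0 : ℝ) 1 := by
  constructor
  · exact le_max_left _ _
  · simp [lsig, le_refl]

lemma lsig_of_one_le {z : ℝ} (h : 1 ≤ z) : lsig z = 1 := by
  simp [lsig, min_eq_left h]

lemma lsig_of_nonpos {z : ℝ} (h : z ≤ 0) : lsig z = 0 := by
  have : min 1 z ≤ 0 := le_trans (min_le_right _ _) h
  simp [lsig, max_eq_left this]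

lemma geom_aux (i : ℕ) : ∀ m, i ≤ m →
    ∑ j ∈ Finset.Ico (i+1) (m+1), (2:ℝ)^i / 2^j = 1 - 2^i / 2^m := by
  intro m hm
  induction m, hm using Nat.le_induction with
  | base => simp
  | succ m hm ih =>
    rw [Finset.sum_Ico_succ_top (by omega), ih]
    have h1 : (2:ℝ)^m ≠ 0 := by positivity
    have h2 : (2:ℝ)^(m+1) ≠ 0 := by positivity
    rw [pow_succ]
    field_simp
    ring

theorem bit_splitting_network_correct (n : ℕ) (hn : 1 ≤ n) (g : ℕ → ℝ → ℝ)
    (hg : ∀ i, 1 ≤ i → i ≤ n → ∀ x : ℝ,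
      g i x = lsig ((2 ^ i * x - 1 - ∑ j ∈ Finset.Ico 1 i, 2 ^ (i - j) * g j x)
        * 2 ^ (n - i) + 1)) :
    (∀ x : ℝ, ∀ i ∈ Finset.Icc 1 n, g i x ∈ Set.Icc (0 : ℝ) 1) ∧
    (∀ (a : ℕ → ℝ), (∀ j ∈ Finset.Icc 1 n, a j = 0 ∨ a j = 1) →
      ∀ x : ℝ, x = ∑ j ∈ Finset.Icc 1 n, a j / 2 ^ j →
        ∀ i ∈ Finset.Icc 1 n, g i x = a i) := by
  constructor
  · intro x i hi
    rw [Finset.mem_Icc] at hi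
    rw [hg i hi.1 hi.2 x]
    exact lsig_mem _
  · intro a ha x hx i hi
    rw [Finset.mem_Icc] at hi
    have key : ∀ i, 1 ≤ i → i ≤ n → g i x = a i := by
      intro i
      induction i using Nat.strong_induction_on with
      | _ i ih =>
        intro h1 hin
        rw [hg i h1 hin x]
        -- rewrite the inner sum using induction hypothesis
        have hsum : ∑ j ∈ Finset.Ico 1 i, (2:ℝ) ^ (i - j) * g j x
            = ∑ j ∈ Finset.Ico 1 i, (2:ℝ)^i / 2^j * a j := by
          apply Finset.sum_congr rfl
          intro j hj
          rw [Finset.mem_Ico] at hj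
          rw [ih j hj.2 hj.1 (by omega),
            pow_sub₀ (2:ℝ) two_ne_zero (le_of_lt hj.2)]
          ring
        have hx2 : (2:ℝ)^i * x = ∑ j ∈ Finset.Ico 1 (n+1), (2:ℝ)^i / 2^j * a j := by
          rw [hx, Finset.mul_sum, ← Finset.Ico_add_one_right_eq_Icc]
          apply Finset.sum_congr rfl
          intro j _
          ring
        set r : ℝ := ∑ j ∈ Finset.Ico (i+1) (n+1), (2:ℝ)^i / 2^j * a j with hr
        have hsplit : (2:ℝ)^i * x - 1 - ∑ j ∈ Finset.Ico 1 i, (2:ℝ) ^ (i - j) * g j x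
            = a i + r - 1 := by
          rw [hsum, hx2,
            ← Finset.sum_Ico_consecutive _ h1 (by omega : i ≤ n + 1),
            Finset.sum_eq_sum_Ico_succ_bot (by omega : i < n + 1)]
          have : (2:ℝ)^i / 2^i = 1 := by
            field_simp
          rw [this]
          ring
        rw [hsplit]
        -- bounds on r
        have hr0 : 0 ≤ r := by
          apply Finset.sum_nonneg
          intro j hj
          rw [Finset.mem_Ico] at hj
          have haj : a j = 0 ∨ a j = 1 := ha j (Finset.mem_Icc.mpr ⟨by omega, by omega⟩)
          rcases haj with h | h <;> rw [h] <;> positivity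
        have hr1 : r ≤ 1 - 2^i / 2^n := by
          rw [← geom_aux i n hin]
          apply Finset.sum_le_sum
          intro j hj
          rw [Finset.mem_Ico] at hj
          have haj : a j = 0 ∨ a j = 1 := ha j (Finset.mem_Icc.mpr ⟨by omega, by omega⟩)
          have hp : (0:ℝ) ≤ 2^i / 2^j := by positivity
          rcases haj with h | h <;> rw [h] <;> nlinarith
        have hpow : (2:ℝ)^(n-i) = 2^n / 2^i := (pow_sub₀ (2:ℝ) two_ne_zero hin).trans (by ring)
        rcases ha i (Finset.mem_Icc.mpr ⟨h1, hin⟩) with h | h <;> rw [h]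
        · apply lsig_of_nonpos
          have hc : (r - 1) * (2:ℝ)^(n-i) ≤ (-(2^i/2^n)) * (2^n/2^i) := by
            rw [hpow]
            apply mul_le_mul_of_nonneg_right (by linarith) (by positivity)
          have he : (-((2:ℝ)^i/2^n)) * (2^n/2^i) = -1 := by
            have h1' : (2:ℝ)^i ≠ 0 := by positivity
            have h2' : (2:ℝ)^n ≠ 0 := by positivity
            field_simp
          nlinarith
        · apply lsig_of_one_le
          have : (0:ℝ) ≤ r * 2^(n-i) := by positivity
          nlinarith
    exact key i hi.1 hi.2
end
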